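/- Let a, b be positive integers and Δ a PR complex of degree type (a,b) on n vertices. Then n ≥ 3b. -/

import Mathlib

open Finset
open scoped Classical

/-- An abstract simplicial complex: a collection of finite subsets of the
vertex type `V` closed under taking subsets. -/
def IsComplex {V : Type} (K : Set (Finset V)) : Prop :=
  ∀ s ∈ K, ∀ t ⊆ s, t ∈ K

/-- The link of a face `σ` in `K`: all faces `τ` disjoint from `σ` with `σ ∪ τ ∈ K`. -/
def link {V : Type} [DecidableEq V] (K : Set (Finset V)) (σ : Finset V) : Set (Finset V) :=
  {τ | Disjoint σ τ ∧ σ ∪ τ ∈ K}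

theorem link_isComplex {V : Type} [DecidableEq V] {K : Set (Finset V)} (hK : IsComplex K)
    (σ : Finset V) : IsComplex (link K σ) := by
  intro s hs t ht
  exact ⟨hs.1.mono_right ht, hK _ hs.2 _ (Finset.union_subset_union_right ht)⟩

/-- The incidence sign of a vertex `x` with respect to a face `σ`, relative to a fixed
(arbitrary) well-ordering of the vertices. -/
noncomputable def bdrySign {V : Type} (σ : Finset V) (x : V) : ℤ :=
  (-1 : ℤ) ^ (σ.filter (fun y => WellOrderingRel y x)).card

/-- The total (reduced) simplicial chain module of `K` with coefficients in `𝕜`: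
functions from the faces of `K` (including the empty face) to `𝕜`. -/
abbrev TotalChains (𝕜 : Type) [Field 𝕜] {V : Type} (K : Set (Finset V)) : Type :=
  {s : Finset V // s ∈ K} → 𝕜

/-- The simplicial boundary operator on the total chain module, written in terms of
cofaces: `(∂c)(τ) = Σ_{x ∉ τ, τ ∪ {x} ∈ K} ± c(τ ∪ {x})`. -/
noncomputable def bdryMap (𝕜 : Type) [Field 𝕜] {V : Type} [DecidableEq V] [Fintype V]
    (K : Set (Finset V)) : TotalChains 𝕜 K →ₗ[𝕜] TotalChains 𝕜 K where
  toFun c := fun τ => ∑ x ∈ τ.1ᶜ,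
    if h : insert x τ.1 ∈ K then bdrySign τ.1 x • c ⟨insert x τ.1, h⟩ else 0
  map_add' c d := by
    funext τ
    rw [Pi.add_apply, ← Finset.sum_add_distrib]
    refine Finset.sum_congr rfl fun x _ => ?_
    split
    · rw [Pi.add_apply, smul_add]
    · rw [add_zero]
  map_smul' a c := by
    funext τ
    rw [RingHom.id_apply, Pi.smul_apply, Finset.smul_sum]
    refine Finset.sum_congr rfl fun x _ => ?_
    split
    · rw [Pi.smul_apply, smul_comm]
    · rw [smul_zero]

/-- The submodule of chains supported on faces of cardinality `i + 1`
(the chains of homological degree `i`). -/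
def degChains (𝕜 : Type) [Field 𝕜] {V : Type} (K : Set (Finset V)) (i : ℤ) :
    Submodule 𝕜 (TotalChains 𝕜 K) where
  carrier := {c | ∀ τ : {s : Finset V // s ∈ K}, (τ.1.card : ℤ) ≠ i + 1 → c τ = 0}
  add_mem' := by
    intro a b ha hb τ hτ
    rw [Pi.add_apply, ha τ hτ, hb τ hτ, add_zero]
  zero_mem' := fun τ _ => rfl
  smul_mem' := by
    intro a c hc τ hτ
    rw [Pi.smul_apply, hc τ hτ, smul_zero]

/-- The `i`-th reduced simplicial homology of the complex `K` over the field `𝕜`: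
degree-`i` cycles modulo boundaries of degree-`(i+1)` chains. -/
noncomputable abbrev redHomology (𝕜 : Type) [Field 𝕜] {V : Type} [DecidableEq V] [Fintype V]
    (K : Set (Finset V)) (i : ℤ) : Type :=
  ↥(degChains 𝕜 K i ⊓ LinearMap.ker (bdryMap 𝕜 K)) ⧸
    Submodule.comap (degChains 𝕜 K i ⊓ LinearMap.ker (bdryMap 𝕜 K)).subtype
      (Submodule.map (bdryMap 𝕜 K) (degChains 𝕜 K (i + 1)))

/-- The complex `K` is PR with degree type `(d p, …, d 1)` and offset `s`:
for every size `m` and degree `i`, some face of cardinality `m` has a link with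
nontrivial reduced homology in degree `i` exactly when `i = r - 1` and
`m = s + d p + ⋯ + d (r+1)` for some `0 ≤ r ≤ p`. -/
def HasDegreeTypeOffset (𝕜 : Type) [Field 𝕜] {V : Type} [DecidableEq V] [Fintype V]
    (K : Set (Finset V)) (p : ℕ) (d : ℕ → ℕ) (s : ℕ) : Prop :=
  ∀ (m : ℕ) (i : ℤ),
    (∃ σ ∈ K, σ.card = m ∧ Nontrivial (redHomology 𝕜 (link K σ) i)) ↔
    (∃ r : ℕ, r ≤ p ∧ i = (r : ℤ) - 1 ∧ m = s + ∑ j ∈ Finset.Ioc r p, d j)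

/-!
Let `σ` be a face of size `s` (the offset) whose link `L` has `H̃₁(L) ≠ 0`. A complex covered by
two simplices has `H̃₁ = 0` (cone off a common vertex, or cone off each simplex separately when
they are disjoint), so `L` has three distinct facets `F₁, F₂, F₃`. Each `σ ∪ Fᵢ` is a facet of the
complex, and links of facets have `H̃₋₁ ≠ 0`, so `|Fᵢ| = a + b`. A face lying in two distinct
facets is contained in a maximal such face `ρ`, whose link is disconnected, so `|ρ| = s + a`;
applied to `σ ∪ (Fᵢ ∩ Fⱼ)` this gives `|Fᵢ ∩ Fⱼ| ≤ a`. Inclusion–exclusion then yields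
`n ≥ |F₁ ∪ F₂ ∪ F₃| ≥ 3(a + b) - 3a = 3b`.
-/

lemma Finset.card_add_card_add_card_le {α : Type*} [DecidableEq α] (A B C : Finset α) :
    #A + #B + #C ≤ #(A ∪ B ∪ C) + #(A ∩ B) + #(A ∩ C) + #(B ∩ C) := by
  have hAB := card_union_add_card_inter A B
  have hABC := card_union_add_card_inter (A ∪ B) C
  have hC : #((A ∪ B) ∩ C) ≤ #(A ∩ C) + #(B ∩ C) := by
    rw [union_inter_distrib_right]
    exact card_union_le _ _
  omega

lemma Fintype.sum_sum_eq_zero_of_antisymm {α M : Type*} [Fintype α] [AddCommGroup M]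
    (T : α → α → M) (hT : ∀ x y, T y x = -T x y) (hdiag : ∀ x, T x x = 0) :
    ∑ x, ∑ y, T x y = 0 := by
  rw [← sum_product']
  refine sum_ninvolution Prod.swap (fun p => by rw [Prod.fst_swap, Prod.snd_swap, hT,
    neg_add_cancel]) (fun ⟨x, y⟩ hxy h => hxy ?_) (fun _ => mem_univ _) Prod.swap_swap
  obtain rfl : y = x := congrArg Prod.fst h
  exact hdiag y

section Signs

variable {V : Type}

lemma bdrySign_mul_self (σ : Finset V) (x : V) : bdrySign σ x * bdrySign σ x = 1 := by
  rw [bdrySign, ← pow_add]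
  exact Even.neg_one_pow ⟨_, rfl⟩

lemma bdrySign_empty (x : V) : bdrySign ∅ x = 1 := by
  simp [bdrySign]

lemma bdrySign_insert [DecidableEq V] {σ : Finset V} {w : V} (hw : w ∉ σ) (x : V) :
    bdrySign (insert w σ) x = (if WellOrderingRel w x then -1 else 1) * bdrySign σ x := by
  rw [bdrySign, bdrySign, filter_insert]
  split
  · rw [card_insert_of_notMem fun h => hw (mem_of_mem_filter _ h), pow_succ, mul_comm]
  · rw [one_mul]

lemma bdrySign_insert_mul_bdrySign_insert [DecidableEq V] {σ : Finset V} {w x : V} (hw : w ∉ σ)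
    (hx : x ∉ σ) (hwx : w ≠ x) :
    bdrySign (insert w σ) x * bdrySign (insert x σ) w = -(bdrySign σ w * bdrySign σ x) := by
  rw [bdrySign_insert hw, bdrySign_insert hx]
  rcases trichotomous_of WellOrderingRel w x with h | h | h
  · rw [if_pos h, if_neg (asymm h)]; ring
  · exact absurd h hwx
  · rw [if_neg (asymm h), if_pos h]; ring

lemma bdrySign_singleton_comm [DecidableEq V] {x y : V} (hxy : x ≠ y) :
    bdrySign {y} x = -bdrySign {x} y := by
  have h := bdrySign_insert_mul_bdrySign_insert (notMem_empty x) (notMem_empty y) hxy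
  rw [insert_empty, insert_empty, bdrySign_empty, bdrySign_empty, mul_one] at h
  linear_combination (-bdrySign {x} y) * bdrySign_mul_self {y} x + bdrySign {y} x * h

end Signs

section Chains

variable {𝕜 : Type} [Field 𝕜] {V : Type} [DecidableEq V] [Fintype V] {K : Set (Finset V)}

noncomputable def extendZero (c : TotalChains 𝕜 K) (t : Finset V) : 𝕜 :=
  if h : t ∈ K then c ⟨t, h⟩ else 0

omit [DecidableEq V] [Fintype V] in
lemma extendZero_of_mem (c : TotalChains 𝕜 K) {t : Finset V} (ht : t ∈ K) :
    extendZero c t = c ⟨t, ht⟩ :=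
  dif_pos ht

omit [DecidableEq V] [Fintype V] in
lemma extendZero_of_notMem (c : TotalChains 𝕜 K) {t : Finset V} (ht : t ∉ K) :
    extendZero c t = 0 :=
  dif_neg ht

lemma bdryMap_apply (c : TotalChains 𝕜 K) {t : Finset V} (ht : t ∈ K) :
    bdryMap 𝕜 K c ⟨t, ht⟩ = ∑ x ∈ tᶜ, bdrySign t x • extendZero c (insert x t) := by
  refine sum_congr rfl fun x _ => ?_
  unfold extendZero
  split <;> simp

lemma extendZero_bdryMap (hK : IsComplex K) (c : TotalChains 𝕜 K) (t : Finset V) :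
    extendZero (bdryMap 𝕜 K c) t = ∑ x ∈ tᶜ, bdrySign t x • extendZero c (insert x t) := by
  by_cases ht : t ∈ K
  · rw [extendZero_of_mem _ ht, bdryMap_apply]
  · rw [extendZero_of_notMem _ ht]
    refine (sum_eq_zero fun x _ => ?_).symm
    rw [extendZero_of_notMem c fun hx => ht (hK _ hx _ (subset_insert x t)), smul_zero]

noncomputable def coneMap (w : V) (c : TotalChains 𝕜 K) : TotalChains 𝕜 K :=
  fun τ => if w ∈ τ.1 then bdrySign (τ.1.erase w) w • extendZero c (τ.1.erase w) else 0

omit [Fintype V] in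
lemma extendZero_coneMap (w : V) (c : TotalChains 𝕜 K) {t : Finset V} (ht : t ∈ K) :
    extendZero (coneMap w c) t =
      if w ∈ t then bdrySign (t.erase w) w • extendZero c (t.erase w) else 0 := by
  rw [extendZero_of_mem _ ht]; rfl

omit [Fintype V] in
lemma extendZero_coneMap_of_notMem (w : V) (c : TotalChains 𝕜 K) {t : Finset V} (hw : w ∉ t) :
    extendZero (coneMap w c) t = 0 := by
  unfold extendZero
  split
  · exact if_neg hw
  · rfl

lemma bdryMap_coneMap_add_coneMap_bdryMap (hK : IsComplex K) (w : V) (c : TotalChains 𝕜 K)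
    (hc : ∀ π, w ∉ π → extendZero c π ≠ 0 → insert w π ∈ K) (τ : {s : Finset V // s ∈ K}) :
    bdryMap 𝕜 K (coneMap w c) τ + coneMap w (bdryMap 𝕜 K c) τ = c τ := by
  obtain ⟨t, ht⟩ := τ
  rw [bdryMap_apply, ← extendZero_of_mem (coneMap w (bdryMap 𝕜 K c)) ht, ← extendZero_of_mem c ht,
    extendZero_coneMap _ _ ht]
  by_cases hw : w ∈ t
  · obtain ⟨t, hwt, rfl⟩ : ∃ t', w ∉ t' ∧ insert w t' = t :=
      ⟨t.erase w, notMem_erase w t, insert_erase hw⟩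
    rw [if_pos hw, erase_insert hwt, extendZero_bdryMap hK, ← insert_compl_insert hwt,
      sum_insert (by simp), smul_add, smul_smul, bdrySign_mul_self, one_smul, smul_sum,
      add_left_comm, add_eq_left, ← sum_add_distrib]
    refine sum_eq_zero fun x hx => ?_
    have hxw : x ≠ w := by rintro rfl; simp at hx
    have hxt : x ∉ t := mem_compl.mp hx ∘ mem_insert_of_mem
    by_cases hxK : insert x (insert w t) ∈ K
    · rw [extendZero_coneMap _ _ hxK, if_pos (mem_insert_of_mem (mem_insert_self w t)),
        erase_insert_of_ne hxw, erase_insert hwt, smul_smul, smul_smul, ← add_smul,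
        bdrySign_insert_mul_bdrySign_insert hwt hxt hxw.symm, neg_add_cancel, zero_smul]
    · have : extendZero c (insert x t) = 0 := by
        by_contra hne
        refine hxK ?_
        rw [insert_comm]
        exact hc _ (by simp [hxw.symm, hwt]) hne
      rw [extendZero_of_notMem _ hxK, this, smul_zero, smul_zero, smul_zero, add_zero]
  · rw [if_neg hw, add_zero, sum_eq_single_of_mem w (mem_compl.mpr hw)]
    · by_cases hwK : insert w t ∈ K
      · rw [extendZero_coneMap _ _ hwK, if_pos (mem_insert_self w t), erase_insert hw, smul_smul,
          bdrySign_mul_self, one_smul]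
      · rw [extendZero_of_notMem _ hwK, smul_zero]
        by_contra hne
        exact hwK (hc t hw (Ne.symm hne))
    · intro x _ hxw
      rw [extendZero_coneMap_of_notMem _ _ (by simp [Ne.symm hxw, hw]), smul_zero]

omit [DecidableEq V] [Fintype V] in
lemma mem_of_extendZero_ne_zero {c : TotalChains 𝕜 K} {t : Finset V} (h : extendZero c t ≠ 0) :
    t ∈ K := by
  by_contra ht
  exact h (extendZero_of_notMem c ht)

omit [DecidableEq V] [Fintype V] in
lemma extendZero_eq_zero_of_mem_degChains {i : ℤ} {c : TotalChains 𝕜 K}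
    (hc : c ∈ degChains 𝕜 K i) {t : Finset V} (ht : (t.card : ℤ) ≠ i + 1) :
    extendZero c t = 0 := by
  unfold extendZero
  split
  · exact hc _ ht
  · rfl

omit [DecidableEq V] [Fintype V] in
lemma extendZero_zero (t : Finset V) : extendZero (0 : TotalChains 𝕜 K) t = 0 := by
  unfold extendZero
  split <;> rfl

omit [Fintype V] in
lemma coneMap_zero (w : V) : coneMap w (0 : TotalChains 𝕜 K) = 0 := by
  funext τ
  simp only [coneMap, extendZero_zero, smul_zero, ite_self, Pi.zero_apply]

omit [Fintype V] in
lemma coneMap_mem_degChains (w : V) {i : ℤ} {c : TotalChains 𝕜 K} (hc : c ∈ degChains 𝕜 K i) :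
    coneMap w c ∈ degChains 𝕜 K (i + 1) := by
  rintro ⟨t, ht⟩ hcard
  dsimp only at hcard
  rw [← extendZero_of_mem (coneMap w c) ht, extendZero_coneMap _ _ ht]
  split_ifs with hw
  · rw [extendZero_eq_zero_of_mem_degChains hc, smul_zero]
    rw [card_erase_of_mem hw]
    have : 0 < t.card := card_pos.mpr ⟨w, hw⟩
    omega
  · rfl

lemma exists_bdryMap_eq_of_forall_insert_mem (hK : IsComplex K) (w : V) {i : ℤ}
    {z : TotalChains 𝕜 K} (hz : z ∈ degChains 𝕜 K i) (hz' : bdryMap 𝕜 K z = 0)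
    (hw : ∀ π, w ∉ π → extendZero z π ≠ 0 → insert w π ∈ K) :
    ∃ d ∈ degChains 𝕜 K (i + 1), bdryMap 𝕜 K d = z := by
  refine ⟨coneMap w z, coneMap_mem_degChains w hz, funext fun τ => ?_⟩
  have h := bdryMap_coneMap_add_coneMap_bdryMap hK w z hw τ
  rwa [hz', coneMap_zero, Pi.zero_apply, add_zero] at h

lemma exists_bdryMap_eq_of_support_subset (hK : IsComplex K) {F : Finset V}
    (hF : F ∈ K) {i : ℤ} (hi : 0 ≤ i) {z : TotalChains 𝕜 K} (hz : z ∈ degChains 𝕜 K i)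
    (hz' : bdryMap 𝕜 K z = 0) (hzF : ∀ π, extendZero z π ≠ 0 → π ⊆ F) :
    ∃ d ∈ degChains 𝕜 K (i + 1), bdryMap 𝕜 K d = z := by
  obtain rfl | ⟨w, hw⟩ := F.eq_empty_or_nonempty
  · refine ⟨0, zero_mem _, funext fun τ => ?_⟩
    rw [map_zero, Pi.zero_apply, eq_comm, ← extendZero_of_mem z τ.2]
    by_contra hne
    refine hne (extendZero_eq_zero_of_mem_degChains hz ?_)
    rw [subset_empty.mp (hzF _ hne), card_empty]
    omega
  · exact exists_bdryMap_eq_of_forall_insert_mem hK w hz hz' fun π _ hπ =>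
      hK F hF _ (insert_subset hw (hzF π hπ))

noncomputable def restrictChain (F : Finset V) (c : TotalChains 𝕜 K) : TotalChains 𝕜 K :=
  fun τ => if τ.1 ⊆ F then c τ else 0

omit [Fintype V] in
lemma extendZero_restrictChain (F : Finset V) (c : TotalChains 𝕜 K) (t : Finset V) :
    extendZero (restrictChain F c) t = if t ⊆ F then extendZero c t else 0 := by
  unfold extendZero restrictChain
  split_ifs <;> rfl

omit [Fintype V] in
lemma restrictChain_mem_degChains (F : Finset V) {i : ℤ} {c : TotalChains 𝕜 K}
    (hc : c ∈ degChains 𝕜 K i) : restrictChain F c ∈ degChains 𝕜 K i := by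
  intro τ hτ
  simp only [restrictChain, hc τ hτ, ite_self]

omit [Fintype V] in
lemma extendZero_restrictChain_ne_zero {F : Finset V} {c : TotalChains 𝕜 K} {t : Finset V}
    (h : extendZero (restrictChain F c) t ≠ 0) : t ⊆ F := by
  rw [extendZero_restrictChain] at h
  by_contra htF
  exact h (if_neg htF)

/-- No nonempty face of `F` lies in a face outside `F`, and the empty face does not matter in
positive degree. -/
lemma bdryMap_restrictChain_of_disjoint {F G : Finset V}
    (hcov : ∀ π ∈ K, π ⊆ F ∨ π ⊆ G) (hFG : Disjoint F G) {i : ℤ} (hi : 1 ≤ i)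
    {z : TotalChains 𝕜 K} (hz : z ∈ degChains 𝕜 K i) (hz' : bdryMap 𝕜 K z = 0) :
    bdryMap 𝕜 K (restrictChain F z) = 0 := by
  funext ⟨t, ht⟩
  rw [bdryMap_apply, Pi.zero_apply]
  by_cases htF : t.Nonempty ∧ t ⊆ F
  · calc _ = bdryMap 𝕜 K z ⟨t, ht⟩ := by
          rw [bdryMap_apply]
          refine sum_congr rfl fun x _ => ?_
          rw [extendZero_restrictChain, ite_eq_left_iff.mpr]
          intro hxF
          by_contra hne
          obtain ⟨y, hy⟩ := htF.1
          rcases hcov _ (mem_of_extendZero_ne_zero (Ne.symm hne)) with h | h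
          · exact hxF h
          · exact disjoint_left.mp hFG (htF.2 hy) (h (mem_insert_of_mem hy))
      _ = 0 := by rw [hz', Pi.zero_apply]
  · refine sum_eq_zero fun x _ => ?_
    rw [extendZero_restrictChain]
    split_ifs with hxF
    · rw [extendZero_eq_zero_of_mem_degChains hz, smul_zero]
      have : t = ∅ := by
        by_contra hne
        exact htF ⟨nonempty_iff_ne_empty.mpr hne, (subset_insert x t).trans hxF⟩
      simp only [this, insert_empty, card_singleton]
      omega
    · rw [smul_zero]

lemma exists_bdryMap_eq_of_forall_subset_or_subset (hK : IsComplex K) {F G : Finset V}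
    (hF : F ∈ K) (hG : G ∈ K) (hcov : ∀ π ∈ K, π ⊆ F ∨ π ⊆ G) {i : ℤ} (hi : 1 ≤ i)
    {z : TotalChains 𝕜 K} (hz : z ∈ degChains 𝕜 K i) (hz' : bdryMap 𝕜 K z = 0) :
    ∃ d ∈ degChains 𝕜 K (i + 1), bdryMap 𝕜 K d = z := by
  by_cases hFG : Disjoint F G
  · have hsplit : restrictChain F z + restrictChain G z = z := by
      funext τ
      simp only [Pi.add_apply, restrictChain]
      split_ifs with hτF hτG hτG
      · have hτ : τ.1 = ∅ := disjoint_self_iff_empty _ |>.mp (hFG.mono hτF hτG)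
        rw [hz τ (by rw [hτ, card_empty]; omega), add_zero]
      · rw [add_zero]
      · rw [zero_add]
      · exact ((hcov τ.1 τ.2).elim hτF hτG).elim
    obtain ⟨dF, hdF, hdF'⟩ := exists_bdryMap_eq_of_support_subset hK hF (i := i)
      (by omega) (restrictChain_mem_degChains F hz)
      (bdryMap_restrictChain_of_disjoint hcov hFG hi hz hz')
      fun _ => extendZero_restrictChain_ne_zero
    obtain ⟨dG, hdG, hdG'⟩ := exists_bdryMap_eq_of_support_subset hK hG (i := i)
      (by omega) (restrictChain_mem_degChains G hz)
      (bdryMap_restrictChain_of_disjoint (fun π hπ => (hcov π hπ).symm) hFG.symm hi hz hz')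
      fun _ => extendZero_restrictChain_ne_zero
    exact ⟨dF + dG, add_mem hdF hdG, by rw [map_add, hdF', hdG', hsplit]⟩
  · obtain ⟨w, hwF, hwG⟩ := not_disjoint_iff.mp hFG
    refine exists_bdryMap_eq_of_forall_insert_mem hK w hz hz' fun π _ hπ => ?_
    rcases hcov π (mem_of_extendZero_ne_zero hπ) with h | h
    · exact hK F hF _ (insert_subset hwF h)
    · exact hK G hG _ (insert_subset hwG h)

end Chains

section Homology

variable {𝕜 : Type} [Field 𝕜] {V : Type} [DecidableEq V] [Fintype V] {M : Set (Finset V)}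

lemma subsingleton_redHomology_of_forall_exists {i : ℤ}
    (h : ∀ z ∈ degChains 𝕜 M i, bdryMap 𝕜 M z = 0 →
      ∃ d ∈ degChains 𝕜 M (i + 1), bdryMap 𝕜 M d = z) :
    Subsingleton (redHomology 𝕜 M i) := by
  rw [Submodule.Quotient.subsingleton_iff, Submodule.eq_top_iff']
  rintro ⟨z, hz, hz'⟩
  exact h z hz hz'

lemma nontrivial_redHomology_of_forall_ne {i : ℤ} {c : TotalChains 𝕜 M} (hc : c ∈ degChains 𝕜 M i)
    (hc' : bdryMap 𝕜 M c = 0) (hnb : ∀ d, bdryMap 𝕜 M d ≠ c) :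
    Nontrivial (redHomology 𝕜 M i) := by
  refine ⟨Submodule.Quotient.mk ⟨c, hc, hc'⟩, 0, fun h => ?_⟩
  rw [Submodule.Quotient.mk_eq_zero, Submodule.mem_comap] at h
  obtain ⟨d, _, hd⟩ := h
  exact hnb d hd

lemma nontrivial_redHomology_neg_one (hM : ∅ ∈ M) (hM' : ∀ ρ ∈ M, ρ = ∅) :
    Nontrivial (redHomology 𝕜 M (-1)) := by
  have hbdry (c : TotalChains 𝕜 M) : bdryMap 𝕜 M c = 0 := by
    funext ⟨t, ht⟩
    rw [bdryMap_apply, Pi.zero_apply]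
    refine sum_eq_zero fun x _ => ?_
    rw [extendZero_of_notMem c fun h => insert_ne_empty x t (hM' _ h), smul_zero]
  refine nontrivial_redHomology_of_forall_ne (c := fun _ => 1) (fun τ hτ => ?_) (hbdry _)
    fun d hd => ?_
  · rw [hM' τ.1 τ.2] at hτ
    exact absurd rfl hτ
  · exact one_ne_zero (congrFun (hd ▸ hbdry d) ⟨∅, hM⟩)

lemma sum_mul_extendZero_bdryMap_singleton (hM : IsComplex M) {g : V → 𝕜}
    (hg : ∀ x y, {x, y} ∈ M → g x = g y) (d : TotalChains 𝕜 M) :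
    ∑ x, g x * extendZero (bdryMap 𝕜 M d) {x} = 0 := by
  simp_rw [extendZero_bdryMap hM, mul_sum, compl_singleton, ← filter_ne', sum_filter]
  refine Fintype.sum_sum_eq_zero_of_antisymm _ (fun x y => ?_)
    (fun x => if_neg (not_not.mpr rfl))
  by_cases hxy : x = y
  · subst hxy
    rw [if_neg (not_not.mpr rfl), neg_zero]
  rw [if_pos hxy, if_pos (Ne.symm hxy), pair_comm x y]
  by_cases hd : extendZero d {y, x} = 0
  · rw [hd, smul_zero, smul_zero, mul_zero, mul_zero, neg_zero]
  rw [hg y x (mem_of_extendZero_ne_zero hd), bdrySign_singleton_comm hxy, neg_smul, mul_neg]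

lemma nontrivial_redHomology_zero (hM : IsComplex M) {g : V → 𝕜}
    (hg : ∀ x y, {x, y} ∈ M → g x = g y) {u v : V} (hu : {u} ∈ M) (hv : {v} ∈ M)
    (huv : g u ≠ g v) : Nontrivial (redHomology 𝕜 M 0) := by
  set c : TotalChains 𝕜 M := fun τ => (if τ.1 = {u} then 1 else 0) - (if τ.1 = {v} then 1 else 0)
  have hc (t : Finset V) :
      extendZero c t = (if t = {u} then 1 else 0) - (if t = {v} then 1 else 0) := by
    by_cases ht : t ∈ M
    · exact extendZero_of_mem c ht
    · rw [extendZero_of_notMem c ht, if_neg (ne_of_mem_of_not_mem hu ht).symm,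
        if_neg (ne_of_mem_of_not_mem hv ht).symm, sub_zero]
  refine nontrivial_redHomology_of_forall_ne (c := c) (fun τ hτ => ?_) ?_ fun d hd => ?_
  · have hτ' (w : V) : τ.1 ≠ {w} := fun h => hτ (by simp [h])
    simp only [c, if_neg (hτ' u), if_neg (hτ' v), sub_zero]
  · funext ⟨t, ht⟩
    rw [bdryMap_apply, Pi.zero_apply]
    simp_rw [hc]
    obtain rfl | ⟨y, hy⟩ := t.eq_empty_or_nonempty
    · simp only [compl_empty, bdrySign_empty, insert_empty, singleton_inj, one_smul,
        sum_sub_distrib, sum_ite_eq', mem_univ, if_true, sub_self]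
    refine sum_eq_zero fun x hx => ?_
    have hx' (w : V) : insert x t ≠ {w} := by
      intro h
      have hxw := (eq_singleton_iff_unique_mem.mp h).2 x (mem_insert_self x t)
      have hyw := (eq_singleton_iff_unique_mem.mp h).2 y (mem_insert_of_mem hy)
      exact mem_compl.mp hx (hxw ▸ hyw ▸ hy)
    rw [if_neg (hx' u), if_neg (hx' v), sub_zero, smul_zero]
  · have h := sum_mul_extendZero_bdryMap_singleton hM hg d
    simp only [hd, hc, singleton_inj, mul_sub, mul_ite, mul_one, mul_zero, sum_sub_distrib,
      sum_ite_eq', mem_univ, if_true] at h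
    exact huv (sub_eq_zero.mp h)

end Homology

section Facets

variable {𝕜 : Type} [Field 𝕜] {V : Type} [DecidableEq V] [Fintype V] {K : Set (Finset V)}

omit [Fintype V] in
lemma eq_empty_of_mem_link_of_maximal {τ ρ : Finset V} (hK : IsComplex K)
    (hτ : Maximal (· ∈ K) τ) (hρ : ρ ∈ link K τ) : ρ = ∅ := by
  by_contra hne
  obtain ⟨x, hx⟩ := nonempty_iff_ne_empty.mpr hne
  have hxτ : insert x τ ⊆ τ :=
    hτ.2 (hK _ hρ.2 _ (insert_subset (mem_union_right _ hx) subset_union_left)) (subset_insert x τ)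
  exact disjoint_right.mp hρ.1 hx (hxτ (mem_insert_self x τ))

omit [Fintype V] in
lemma maximal_union_of_maximal_link (hK : IsComplex K) {σ F : Finset V}
    (hF : Maximal (· ∈ link K σ) F) : Maximal (· ∈ K) (σ ∪ F) := by
  refine ⟨hF.1.2, fun π hπ hσπ x hxπ => ?_⟩
  by_contra hx
  have hxσ : x ∉ σ := fun h => hx (mem_union_left _ h)
  have hxF : insert x F ∈ link K σ :=
    ⟨disjoint_insert_right.mpr ⟨hxσ, hF.1.1⟩, hK _ hπ _ (union_subset (subset_union_left.trans hσπ)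
      (insert_subset hxπ (subset_union_right.trans hσπ)))⟩
  exact hx (mem_union_right _ (hF.2 hxF (subset_insert x F) (mem_insert_self x F)))

lemma exists_three_maximal_of_nontrivial (hK : IsComplex K)
    (h : Nontrivial (redHomology 𝕜 K 1)) :
    ∃ F₁ F₂ F₃, Maximal (· ∈ K) F₁ ∧ Maximal (· ∈ K) F₂ ∧ Maximal (· ∈ K) F₃ ∧
      F₁ ≠ F₂ ∧ F₁ ≠ F₃ ∧ F₂ ≠ F₃ := by
  have hcov (F G : Finset V) (hF : F ∈ K) (hG : G ∈ K) : ∃ π ∈ K, ¬π ⊆ F ∧ ¬π ⊆ G := by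
    by_contra! hcov
    refine not_subsingleton_iff_nontrivial.mpr h
      (subsingleton_redHomology_of_forall_exists fun z hz hz' => ?_)
    exact exists_bdryMap_eq_of_forall_subset_or_subset hK hF hG
      (fun π hπ => or_iff_not_imp_left.mpr (hcov π hπ)) le_rfl hz hz'
  obtain ⟨π₀, hπ₀⟩ : ∃ π, π ∈ K := by
    by_contra! hempty
    have : IsEmpty {s : Finset V // s ∈ K} := ⟨fun τ => hempty τ.1 τ.2⟩
    exact not_subsingleton_iff_nontrivial.mpr h
      (subsingleton_redHomology_of_forall_exists fun z _ _ => ⟨0, zero_mem _, funext isEmptyElim⟩)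
  obtain ⟨F₁, -, hF₁⟩ := Finite.exists_le_maximal (p := (· ∈ K)) hπ₀
  obtain ⟨π₁, hπ₁, hπ₁F₁, -⟩ := hcov F₁ F₁ hF₁.1 hF₁.1
  obtain ⟨F₂, hπ₁F₂, hF₂⟩ := Finite.exists_le_maximal (p := (· ∈ K)) hπ₁
  obtain ⟨π₂, hπ₂, hπ₂F₁, hπ₂F₂⟩ := hcov F₁ F₂ hF₁.1 hF₂.1
  obtain ⟨F₃, hπ₂F₃, hF₃⟩ := Finite.exists_le_maximal (p := (· ∈ K)) hπ₂
  refine ⟨F₁, F₂, F₃, hF₁, hF₂, hF₃, ?_, ?_, ?_⟩ <;> rintro rfl <;> contradiction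

/-- The vertices `x` of the link with `insert x ρ ⊆ A` form a nonempty proper union of connected
components. -/
lemma nontrivial_redHomology_link_zero (hK : IsComplex K) {ρ A B : Finset V}
    (hA : Maximal (· ∈ K) A) (hB : Maximal (· ∈ K) B) (hAB : A ≠ B) (hρA : ρ ⊆ A) (hρB : ρ ⊆ B)
    (huniq : ∀ x ∉ ρ, ∀ H H', Maximal (· ∈ K) H → Maximal (· ∈ K) H' →
      insert x ρ ⊆ H → insert x ρ ⊆ H' → H = H') :
    Nontrivial (redHomology 𝕜 (link K ρ) 0) := by
  have hvertex {x : V} {H : Finset V} (hH : H ∈ K) (hx : x ∈ H) (hxρ : x ∉ ρ) (hρH : ρ ⊆ H) :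
      {x} ∈ link K ρ :=
    ⟨disjoint_singleton_right.mpr hxρ, hK _ hH _ (union_subset hρH (singleton_subset_iff.mpr hx))⟩
  obtain ⟨u, huA, huρ⟩ : ∃ u ∈ A, u ∉ ρ := by
    by_contra! h
    exact hAB (hA.eq_of_le hB.1 (subset_trans h hρB))
  obtain ⟨v, hvB, hvρ⟩ : ∃ v ∈ B, v ∉ ρ := by
    by_contra! h
    exact hAB (hB.eq_of_le hA.1 (subset_trans h hρA)).symm
  refine nontrivial_redHomology_zero (link_isComplex hK ρ)
    (g := fun x => if insert x ρ ⊆ A then (1 : 𝕜) else 0) (fun x y hxy => ?_)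
    (hvertex hA.1 huA huρ hρA) (hvertex hB.1 hvB hvρ hρB) ?_
  · obtain ⟨hdisj, hmem⟩ := hxy
    obtain ⟨H, hsub, hH⟩ := Finite.exists_le_maximal (p := (· ∈ K)) hmem
    have hins {z : V} (hz : z ∈ ({x, y} : Finset V)) : z ∉ ρ ∧ insert z ρ ⊆ H :=
      ⟨disjoint_right.mp hdisj hz, insert_subset (hsub (mem_union_right _ hz))
        (subset_union_left.trans hsub)⟩
    obtain ⟨hx, hxH⟩ := hins (mem_insert_self x {y})
    obtain ⟨hy, hyH⟩ := hins (mem_insert_of_mem (mem_singleton_self y))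
    have hxy : insert x ρ ⊆ A ↔ insert y ρ ⊆ A :=
      ⟨fun h => huniq x hx H A hH hA hxH h ▸ hyH, fun h => huniq y hy H A hH hA hyH h ▸ hxH⟩
    simp only [hxy]
  · rw [if_pos (insert_subset huA hρA), if_neg fun hv => hAB (huniq v hvρ A B hA hB hv
      (insert_subset hvB hρB))]
    exact one_ne_zero

/-- Take `ρ` maximal among the faces containing `base` that lie in two distinct facets. -/
lemma exists_superset_nontrivial_redHomology_link_zero (hK : IsComplex K) {A B base : Finset V}
    (hA : Maximal (· ∈ K) A) (hB : Maximal (· ∈ K) B) (hAB : A ≠ B) (hbA : base ⊆ A)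
    (hbB : base ⊆ B) :
    ∃ ρ ∈ K, base ⊆ ρ ∧ Nontrivial (redHomology 𝕜 (link K ρ) 0) := by
  obtain ⟨ρ, hbρ, hρ⟩ := Finite.exists_le_maximal (p := fun π => base ⊆ π ∧
      ∃ A B, Maximal (· ∈ K) A ∧ Maximal (· ∈ K) B ∧ A ≠ B ∧ π ⊆ A ∧ π ⊆ B)
    ⟨subset_rfl, A, B, hA, hB, hAB, hbA, hbB⟩
  obtain ⟨-, A', B', hA', hB', hAB', hρA', hρB'⟩ := hρ.1
  refine ⟨ρ, hK _ hA'.1 _ hρA', hbρ, nontrivial_redHomology_link_zero hK hA' hB' hAB' hρA' hρB'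
    fun x hx H H' hH hH' hxH hxH' => ?_⟩
  by_contra hne
  exact hx (hρ.2 ⟨hbρ.trans (subset_insert x ρ), H, H', hH, hH', hne, hxH, hxH'⟩
    (subset_insert x ρ) (mem_insert_self x ρ))

end Facets

namespace HasDegreeTypeOffset

variable {𝕜 : Type} [Field 𝕜] {V : Type} [DecidableEq V] [Fintype V] {K : Set (Finset V)}
  {p : ℕ} {d : ℕ → ℕ} {s : ℕ}

lemma card_eq (H : HasDegreeTypeOffset 𝕜 K p d s) {σ : Finset V} (hσ : σ ∈ K) {i : ℤ} {r : ℕ}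
    (hi : i = r - 1) (h : Nontrivial (redHomology 𝕜 (link K σ) i)) :
    σ.card = s + ∑ j ∈ Ioc r p, d j := by
  obtain ⟨r', -, hi', hσ'⟩ := (H σ.card i).mp ⟨σ, hσ, rfl, h⟩
  obtain rfl : r = r' := by omega
  exact hσ'

lemma exists_nontrivial (H : HasDegreeTypeOffset 𝕜 K p d s) {r : ℕ} (hr : r ≤ p) :
    ∃ σ ∈ K, σ.card = s + ∑ j ∈ Ioc r p, d j ∧ Nontrivial (redHomology 𝕜 (link K σ) (r - 1)) := by
  obtain ⟨σ, hσ, hcard, h⟩ := (H _ _).mpr ⟨r, hr, rfl, rfl⟩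
  exact ⟨σ, hσ, hcard, h⟩

lemma card_eq_of_maximal (hK : IsComplex K) (H : HasDegreeTypeOffset 𝕜 K p d s) {τ : Finset V}
    (hτ : Maximal (· ∈ K) τ) : τ.card = s + ∑ j ∈ Ioc 0 p, d j :=
  H.card_eq hτ.1 (by norm_num) <| nontrivial_redHomology_neg_one
    ⟨disjoint_empty_right τ, by rw [union_empty]; exact hτ.1⟩
    fun _ hρ => eq_empty_of_mem_link_of_maximal hK hτ hρ

lemma card_le_of_subset_of_maximal (hK : IsComplex K) (H : HasDegreeTypeOffset 𝕜 K p d s)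
    {A B base : Finset V} (hA : Maximal (· ∈ K) A) (hB : Maximal (· ∈ K) B) (hAB : A ≠ B)
    (hbA : base ⊆ A) (hbB : base ⊆ B) : base.card ≤ s + ∑ j ∈ Ioc 1 p, d j := by
  obtain ⟨ρ, hρ, hbρ, h⟩ :=
    exists_superset_nontrivial_redHomology_link_zero (𝕜 := 𝕜) hK hA hB hAB hbA hbB
  exact H.card_eq hρ (r := 1) (by norm_num) h ▸ card_le_card hbρ

lemma card_add_card_of_maximal_link (hK : IsComplex K) (H : HasDegreeTypeOffset 𝕜 K p d s)
    {σ F : Finset V} (hF : Maximal (· ∈ link K σ) F) :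
    #σ + #F = s + ∑ j ∈ Ioc 0 p, d j := by
  rw [← card_union_of_disjoint hF.1.1]
  exact H.card_eq_of_maximal hK (maximal_union_of_maximal_link hK hF)

lemma card_add_card_inter_le_of_maximal_link (hK : IsComplex K)
    (H : HasDegreeTypeOffset 𝕜 K p d s) {σ F G : Finset V} (hF : Maximal (· ∈ link K σ) F)
    (hG : Maximal (· ∈ link K σ) G) (hFG : F ≠ G) :
    #σ + #(F ∩ G) ≤ s + ∑ j ∈ Ioc 1 p, d j := by
  have hne : σ ∪ F ≠ σ ∪ G := fun h => hFG <| by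
    rw [← union_sdiff_cancel_left hF.1.1, h, union_sdiff_cancel_left hG.1.1]
  rw [← card_union_of_disjoint (hF.1.1.mono_right inter_subset_left)]
  exact H.card_le_of_subset_of_maximal hK (maximal_union_of_maximal_link hK hF)
    (maximal_union_of_maximal_link hK hG) hne (union_subset_union_right inter_subset_left)
    (union_subset_union_right inter_subset_right)

end HasDegreeTypeOffset

theorem card_ge_of_degreeType_ab_general (𝕜 : Type) [Field 𝕜] (a b : ℕ) (n : ℕ)
    (K : Set (Finset (Fin n))) (hK : IsComplex K)
    (hdeg : ∃ s : ℕ, HasDegreeTypeOffset 𝕜 K 2 (fun j => if j = 2 then a else b) s) :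
    3 * b ≤ n := by
  obtain ⟨s, H⟩ := hdeg
  obtain ⟨σ, -, -, hL⟩ := H.exists_nontrivial (r := 2) le_rfl
  obtain ⟨F₁, F₂, F₃, h₁, h₂, h₃, h₁₂, h₁₃, h₂₃⟩ :=
    exists_three_maximal_of_nontrivial (link_isComplex hK σ) hL
  have hcard {F : Finset (Fin n)} (hF : Maximal (· ∈ link K σ) F) : #σ + #F = s + (b + a) := by
    simpa [sum_Ioc_succ_top] using H.card_add_card_of_maximal_link hK hF
  have hinter {F G : Finset (Fin n)} (hF : Maximal (· ∈ link K σ) F)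
      (hG : Maximal (· ∈ link K σ) G) (hFG : F ≠ G) : #σ + #(F ∩ G) ≤ s + a := by
    simpa using H.card_add_card_inter_le_of_maximal_link hK hF hG hFG
  have hn : #(F₁ ∪ F₂ ∪ F₃) ≤ n := by simpa using card_le_univ (F₁ ∪ F₂ ∪ F₃)
  have := card_add_card_add_card_le F₁ F₂ F₃
  linarith [hcard h₁, hcard h₂, hcard h₃, hinter h₁ h₂ h₁₂, hinter h₁ h₃ h₁₃, hinter h₂ h₃ h₂₃]

/-- **Vertex lower bound for PR complexes of degree type `(a, b)`.** A PR complex of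
degree type `(a, b)` (with some offset `s`) on `n` vertices satisfies `n ≥ 3b`. -/
theorem card_ge_of_degreeType_ab (𝕜 : Type) [Field 𝕜] (a b : ℕ) (ha : 0 < a)
    (hb : 0 < b) (n : ℕ) (K : Set (Finset (Fin n))) (hK : IsComplex K)
    (hdeg : ∃ s : ℕ, HasDegreeTypeOffset 𝕜 K 2 (fun j => if j = 2 then a else b) s) :
    3 * b ≤ n :=
  card_ge_of_degreeType_ab_general 𝕜 a b n K hK hdeg
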